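/- Let T, T' : ℝ^d → [0,1]^d be componentwise nondecreasing maps with ‖T − T'‖_∞ ≤ δ (sup over all points and coordinates), let A ⊆ ℝ^d, and let B denote the upper boundary of ⟨T(A)⟩. Then the symmetric difference ⟨T(A)⟩ △ ⟨T'(A)⟩ is contained in the closed δ√d-neighbourhood of B intersected with [0,1]^d. More precisely, ⟨T'(A)⟩ △ ⟨T(A)⟩ ⊆ ⟨⟨T(A)⟩ + δ(1,…,1)⟩ \ interior of (⟨T(A)⟩ − δ(1,…,1)), all intersected with [0,1]^d. -/
import Mathlib

open Set

/-- Lower layer `⟨B⟩ = ⋃_{u ∈ B} [0, u]`. -/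
def lowerLayer {d : ℕ} (B : Set (Fin d → ℝ)) : Set (Fin d → ℝ) := ⋃ u ∈ B, Set.Icc 0 u

/-- The "upper" boundary of a lower set. -/
def upperBoundary {d : ℕ} (B : Set (Fin d → ℝ)) : Set (Fin d → ℝ) :=
  {x ∈ closure B | ∀ ε : ℝ, 0 < ε → x + ε • (1 : Fin d → ℝ) ∉ closure B}

/-- Closed δ-neighbourhood in Euclidean distance of `S`, intersected with `[0,1]^d`. -/
def eNbhd {d : ℕ} (S : Set (Fin d → ℝ)) (δ : ℝ) : Set (Fin d → ℝ) :=
  {u ∈ Set.Icc (0 : Fin d → ℝ) 1 |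
    ∃ v ∈ S, Real.sqrt (∑ i, (u i - v i) ^ 2) ≤ δ}

namespace Stmt13Aux

variable {d : ℕ}

lemma mem_lowerLayer {B : Set (Fin d → ℝ)} {x : Fin d → ℝ} :
    x ∈ lowerLayer B ↔ ∃ u ∈ B, 0 ≤ x ∧ x ≤ u := by
  simp only [lowerLayer, Set.mem_iUnion, Set.mem_Icc]
  tauto

lemma lower_mem {B : Set (Fin d → ℝ)} {x y : Fin d → ℝ}
    (hx : x ∈ lowerLayer B) (h0 : 0 ≤ y) (hyx : y ≤ x) : y ∈ lowerLayer B := by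
  obtain ⟨u, hu, _, hxu⟩ := mem_lowerLayer.mp hx
  exact mem_lowerLayer.mpr ⟨u, hu, h0, hyx.trans hxu⟩

lemma nonneg_of_mem {B : Set (Fin d → ℝ)} {x : Fin d → ℝ} (hx : x ∈ lowerLayer B) : 0 ≤ x :=
  (mem_lowerLayer.mp hx).choose_spec.2.1

lemma closure_strict {B : Set (Fin d → ℝ)} {p q : Fin d → ℝ}
    (hp : p ∈ closure (lowerLayer B)) (h0 : 0 ≤ q) (hq : ∀ i, q i < p i) :
    q ∈ lowerLayer B := by
  have hU : IsOpen {w : Fin d → ℝ | ∀ i, q i < w i} := by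
    have h : {w : Fin d → ℝ | ∀ i, q i < w i} = ⋂ i, {w | q i < w i} := by
      ext w; simp
    rw [h]
    exact isOpen_iInter_of_finite fun i => isOpen_lt continuous_const (continuous_apply i)
  obtain ⟨w, hw1, hw2⟩ := _root_.mem_closure_iff.mp hp _ hU hq
  exact lower_mem hw2 h0 (fun i => (hw1 i).le)

lemma exists_boundary {B : Set (Fin d → ℝ)} {δ : ℝ} (hδ : 0 ≤ δ) {y : Fin d → ℝ}
    (hy : y ∈ lowerLayer B) (hy2 : y + δ • (1 : Fin d → ℝ) ∉ lowerLayer B) :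
    ∃ t, 0 ≤ t ∧ t ≤ δ ∧ y + t • (1 : Fin d → ℝ) ∈ upperBoundary (lowerLayer B) := by
  have hy0 : 0 ≤ y := nonneg_of_mem hy
  set S : Set ℝ := {t | t ∈ Set.Icc 0 δ ∧ y + t • (1 : Fin d → ℝ) ∈ lowerLayer B} with hS
  have h0S : (0:ℝ) ∈ S := ⟨⟨le_refl 0, hδ⟩, by simpa using hy⟩
  have hbdd : BddAbove S := ⟨δ, fun t ht => ht.1.2⟩
  set t₀ := sSup S with ht₀
  have ht₀0 : 0 ≤ t₀ := le_csSup hbdd h0S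
  have ht₀δ : t₀ ≤ δ := csSup_le ⟨0, h0S⟩ (fun t ht => ht.1.2)
  refine ⟨t₀, ht₀0, ht₀δ, ?_, ?_⟩
  · rw [Metric.mem_closure_iff]
    intro ε hε
    obtain ⟨t, htS, ht⟩ := exists_lt_of_lt_csSup ⟨0, h0S⟩ (show t₀ - ε/2 < t₀ by linarith)
    refine ⟨y + t • (1 : Fin d → ℝ), htS.2, ?_⟩
    have htle : t ≤ t₀ := le_csSup hbdd htS
    have hle : dist (y + t₀ • (1 : Fin d → ℝ)) (y + t • (1 : Fin d → ℝ)) ≤ ε/2 := by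
      rw [dist_pi_le_iff (by linarith)]
      intro i
      simp only [Pi.add_apply, Pi.smul_apply, Pi.one_apply, smul_eq_mul, mul_one,
        Real.dist_eq]
      rw [abs_le]
      constructor <;> linarith
    linarith
  · intro ε hε hmem
    have hq : y + (t₀ + ε/2) • (1 : Fin d → ℝ) ∈ lowerLayer B := by
      refine closure_strict hmem ?_ ?_
      · intro i
        simp only [Pi.zero_apply, Pi.add_apply, Pi.smul_apply, Pi.one_apply, smul_eq_mul,
          mul_one]
        have := hy0 i
        simp only [Pi.zero_apply] at this
        linarith
      · intro i
        simp only [Pi.add_apply, Pi.smul_apply, Pi.one_apply, smul_eq_mul, mul_one]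
        linarith
    by_cases h : t₀ + ε/2 ≤ δ
    · have hmemS : t₀ + ε/2 ∈ S := ⟨⟨by linarith, h⟩, hq⟩
      have := le_csSup hbdd hmemS
      linarith
    · refine hy2 (lower_mem hq ?_ ?_)
      · intro i
        simp only [Pi.zero_apply, Pi.add_apply, Pi.smul_apply, Pi.one_apply, smul_eq_mul,
          mul_one]
        have := hy0 i
        simp only [Pi.zero_apply] at this
        linarith
      · intro i
        simp only [Pi.add_apply, Pi.smul_apply, Pi.one_apply, smul_eq_mul, mul_one]
        linarith

lemma sqrt_sum_le {δ : ℝ} (hδ : 0 ≤ δ) {x z : Fin d → ℝ} (h : ∀ i, |x i - z i| ≤ δ) :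
    Real.sqrt (∑ i, (x i - z i) ^ 2) ≤ δ * Real.sqrt d := by
  have h1 : ∑ i, (x i - z i) ^ 2 ≤ (d : ℝ) * δ ^ 2 := by
    calc ∑ i, (x i - z i) ^ 2 ≤ ∑ _i : Fin d, δ ^ 2 :=
          Finset.sum_le_sum fun i _ =>
            sq_le_sq' (by linarith [(abs_le.mp (h i)).1]) (abs_le.mp (h i)).2
      _ = (d : ℝ) * δ ^ 2 := by simp [Finset.sum_const, mul_comm]
  calc Real.sqrt (∑ i, (x i - z i) ^ 2) ≤ Real.sqrt ((d : ℝ) * δ ^ 2) := Real.sqrt_le_sqrt h1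
    _ = δ * Real.sqrt d := by
        rw [Real.sqrt_mul (Nat.cast_nonneg d), Real.sqrt_sq hδ]; ring

end Stmt13Aux

open Stmt13Aux in
/-- If `T, T'` are componentwise nondecreasing maps into `[0,1]^d` with
`‖T − T'‖_∞ ≤ δ`, then `⟨T(A)⟩ △ ⟨T'(A)⟩` lies in the closed `δ√d`-neighbourhood of the
upper boundary of `⟨T(A)⟩`, and more precisely in
`⟨⟨T(A)⟩ + δ𝟙⟩ \ int(⟨T(A)⟩ − δ𝟙)` (all intersected with `[0,1]^d`). -/
theorem stmt13 (d : ℕ) (T T' : (Fin d → ℝ) → (Fin d → ℝ))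
    (hT : Monotone T) (hT' : Monotone T')
    (hrange : ∀ x, T x ∈ Set.Icc (0 : Fin d → ℝ) 1)
    (hrange' : ∀ x, T' x ∈ Set.Icc (0 : Fin d → ℝ) 1)
    (δ : ℝ) (hδ : 0 ≤ δ) (hclose : ∀ x i, |T x i - T' x i| ≤ δ)
    (A : Set (Fin d → ℝ)) :
    (symmDiff (lowerLayer (T '' A)) (lowerLayer (T' '' A)) ⊆
      eNbhd (upperBoundary (lowerLayer (T '' A))) (δ * Real.sqrt d)) ∧
    (symmDiff (lowerLayer (T' '' A)) (lowerLayer (T '' A)) ∩ Set.Icc 0 1 ⊆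
      (lowerLayer ((fun u => u + δ • (1 : Fin d → ℝ)) '' lowerLayer (T '' A)) \
        interior ((fun u => u - δ • (1 : Fin d → ℝ)) '' lowerLayer (T '' A)))
        ∩ Set.Icc 0 1) := by
  set L := lowerLayer (T '' A) with hL
  set L' := lowerLayer (T' '' A) with hL'
  -- if x ∈ L and x ∉ L' then x + δ𝟙 ∉ L
  have key1 : ∀ x : Fin d → ℝ, x ∈ L → x ∉ L' → x + δ • (1 : Fin d → ℝ) ∉ L := by
    intro x hx hx' hcon
    obtain ⟨u, ⟨b, hb, rfl⟩, h0, hle⟩ := mem_lowerLayer.mp hcon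
    refine hx' (mem_lowerLayer.mpr ⟨T' b, ⟨b, hb, rfl⟩, nonneg_of_mem hx, ?_⟩)
    intro i
    have h1 := hle i
    have h2 := (abs_le.mp (hclose b i)).2
    simp only [Pi.add_apply, Pi.smul_apply, Pi.one_apply, smul_eq_mul, mul_one] at h1
    linarith
  constructor
  · -- first inclusion
    intro x hx
    rw [Set.mem_symmDiff] at hx
    -- produce y with y ∈ L, y + δ𝟙 ∉ L, |x i - y i| ≤ δ, and x ∈ [0,1]
    have main : (x ∈ Set.Icc (0 : Fin d → ℝ) 1) ∧
        ∃ y, y ∈ L ∧ y + δ • (1 : Fin d → ℝ) ∉ L ∧ ∀ i, y i ≤ x i ∧ x i - y i ≤ δ := by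
      rcases hx with ⟨hxL, hxL'⟩ | ⟨hxL', hxL⟩
      · obtain ⟨u, ⟨a, ha, rfl⟩, h0, hle⟩ := mem_lowerLayer.mp hxL
        refine ⟨⟨h0, fun i => (hle i).trans ((hrange a).2 i)⟩,
          x, hxL, key1 x hxL hxL', fun i => by constructor <;> simp [hδ]⟩
      · obtain ⟨u, ⟨a, ha, rfl⟩, h0, hle⟩ := mem_lowerLayer.mp hxL'
        refine ⟨⟨h0, fun i => (hle i).trans ((hrange' a).2 i)⟩, ?_⟩
        refine ⟨fun i => max (x i - δ) 0, ?_, ?_, ?_⟩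
        · refine mem_lowerLayer.mpr ⟨T a, ⟨a, ha, rfl⟩, fun i => le_max_right _ _, fun i => ?_⟩
          have h1 := hle i
          have h2 := (abs_le.mp (hclose a i)).1
          have h3 := (hrange a).1 i
          simp only [Pi.zero_apply] at h3
          exact max_le (by linarith) h3
        · intro hcon
          refine hxL (lower_mem hcon h0 fun i => ?_)
          show x i ≤ max (x i - δ) 0 + δ • (1 : Fin d → ℝ) i
          simp only [Pi.smul_apply, Pi.one_apply, smul_eq_mul, mul_one]
          have hx0 : (0:ℝ) ≤ x i := h0 i
          have hm1 : x i - δ ≤ max (x i - δ) 0 := le_max_left _ _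
          linarith
        · intro i
          have hx0 : (0:ℝ) ≤ x i := h0 i
          have hm1 : x i - δ ≤ max (x i - δ) 0 := le_max_left _ _
          have hm3 : max (x i - δ) 0 ≤ x i := max_le (by linarith) hx0
          refine ⟨?_, ?_⟩ <;> · show _; linarith
    obtain ⟨hx01, y, hyL, hyout, hyclose⟩ := main
    obtain ⟨t, ht0, htδ, hbd⟩ := exists_boundary hδ hyL hyout
    refine ⟨hx01, y + t • (1 : Fin d → ℝ), hbd, ?_⟩
    refine sqrt_sum_le hδ fun i => ?_
    simp only [Pi.add_apply, Pi.smul_apply, Pi.one_apply, smul_eq_mul, mul_one]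
    have h1 := hyclose i
    rw [abs_le]
    constructor <;> linarith [h1.1, h1.2]
  · -- second inclusion
    intro x hx
    obtain ⟨hxsd, hx01⟩ := hx
    rw [Set.mem_symmDiff] at hxsd
    refine ⟨⟨?_, ?_⟩, hx01⟩
    · -- x ∈ ⟨L + δ𝟙⟩
      rcases hxsd with ⟨hxL', hxL⟩ | ⟨hxL, hxL'⟩
      · obtain ⟨u, ⟨a, ha, rfl⟩, h0, hle⟩ := mem_lowerLayer.mp hxL'
        have hTa : T a ∈ L := mem_lowerLayer.mpr ⟨T a, ⟨a, ha, rfl⟩, (hrange a).1, le_refl _⟩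
        refine mem_lowerLayer.mpr ⟨T a + δ • (1 : Fin d → ℝ), ⟨T a, hTa, rfl⟩, h0, fun i => ?_⟩
        have h1 := hle i
        have h2 := (abs_le.mp (hclose a i)).1
        simp only [Pi.add_apply, Pi.smul_apply, Pi.one_apply, smul_eq_mul, mul_one]
        linarith
      · refine mem_lowerLayer.mpr ⟨x + δ • (1 : Fin d → ℝ), ⟨x, hxL, rfl⟩,
          nonneg_of_mem hxL, fun i => ?_⟩
        simp only [Pi.add_apply, Pi.smul_apply, Pi.one_apply, smul_eq_mul, mul_one]
        linarith
    · -- x ∉ interior (L - δ𝟙)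
      intro hint
      obtain ⟨ε, hε, hball⟩ := Metric.mem_nhds_iff.mp (mem_interior_iff_mem_nhds.mp hint)
      have hdist : dist (x + (ε/2) • (1 : Fin d → ℝ)) x ≤ ε/2 := by
        rw [dist_pi_le_iff (by positivity)]
        intro i
        simp only [Pi.add_apply, Pi.smul_apply, Pi.one_apply, smul_eq_mul, mul_one,
          Real.dist_eq]
        rw [abs_le]
        constructor <;> linarith
      have hmem : x + (ε/2) • (1 : Fin d → ℝ) ∈
          (fun u => u - δ • (1 : Fin d → ℝ)) '' L :=
        hball (Metric.mem_ball.mpr (lt_of_le_of_lt hdist (by linarith)))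
      obtain ⟨w, hwL, hw⟩ := hmem
      have hwco : ∀ i, w i = x i + ε/2 + δ := by
        intro i
        have := congrFun hw i
        simp only [Pi.sub_apply, Pi.add_apply, Pi.smul_apply, Pi.one_apply, smul_eq_mul,
          mul_one] at this
        linarith
      rcases hxsd with ⟨hxL', hxL⟩ | ⟨hxL, hxL'⟩
      · refine hxL (lower_mem hwL hx01.1 fun i => ?_)
        rw [hwco i]; linarith
      · refine key1 x hxL hxL' (lower_mem hwL ?_ fun i => ?_)
        · intro i
          simp only [Pi.zero_apply, Pi.add_apply, Pi.smul_apply, Pi.one_apply, smul_eq_mul,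
            mul_one]
          have := hx01.1 i
          simp only [Pi.zero_apply] at this
          linarith
        · simp only [Pi.add_apply, Pi.smul_apply, Pi.one_apply, smul_eq_mul, mul_one]
          rw [hwco i]; linarith
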